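/- arXiv:2204.10954 — 2 statements merged into one kernel-verified Lean document; each statement's English description precedes it below -/
import Mathlib

section
/- Let U_0 ∈ L³(ℝ³). There exists an absolute constant c>0 such that for every t>0, every ρ>0 and every x ∈ ℝ³, t^{1/2}|(H*U_0)(t,x)| ≤ c‖U_0‖_{L³(B(x,ρ))} + c e^{−ρ²/(8t)}‖U_0‖_3. -/
open MeasureTheory ENNReal Metric Set Filter
open scoped Topology NNReal

noncomputable section

/-- Euclidean 3-space. -/
abbrev E3 : Type := EuclideanSpace ℝ (Fin 3)

/-- Standard basis vector. -/
def eb (i : Fin 3) : E3 := EuclideanSpace.single i 1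

/-- Divergence of a vector field. -/
def vdiv (v : E3 → E3) (x : E3) : ℝ := ∑ i, fderiv ℝ v x (eb i) i

/-- Laplacian of a vector field. -/
def vlap (v : E3 → E3) (x : E3) : E3 :=
  ∑ i, fderiv ℝ (fun y => fderiv ℝ v y (eb i)) x (eb i)

/-- Laplacian of a scalar field. -/
def slap (g : E3 → ℝ) (x : E3) : ℝ :=
  ∑ i, fderiv ℝ (fun y => fderiv ℝ g y (eb i)) x (eb i)

/-- Localized L^p norm: `‖u‖_{p,ρ} = sup_x (∫_{B(x,ρ)} |u|^p)^{1/p}`. -/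
def locLp {α : Type*} [NormedAddCommGroup α] (p ρ : ℝ) (u : E3 → α) : ℝ≥0∞ :=
  ⨆ x : E3, (∫⁻ y in Metric.ball x ρ, (‖u y‖₊ : ℝ≥0∞) ^ p) ^ (1 / p)

/-- Smooth, compactly supported, divergence-free vector field. -/
def IsTestDivFree (v : E3 → E3) : Prop :=
  ContDiff ℝ (⊤ : ℕ∞) v ∧ HasCompactSupport v ∧ ∀ x, vdiv v x = 0

/-- Membership in `J³(ℝ³)`: the closure in `L³` of smooth compactly supported
divergence-free fields. -/
def InJ3 (u : E3 → E3) : Prop :=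
  MemLp u 3 volume ∧
    ∀ ε : ℝ, 0 < ε → ∃ v : E3 → E3, IsTestDivFree v ∧
      eLpNorm (u - v) 3 volume < ENNReal.ofReal ε

/-- `(U, π)` is a classical solution to the Navier–Stokes equations
`U_t + (U·∇)U + ∇π = ΔU`, `∇·U = 0`, at each time of the set `I`. -/
def IsNSSolOn (I : Set ℝ) (U : ℝ → E3 → E3) (π : ℝ → E3 → ℝ) : Prop :=
  ∀ t ∈ I, ContDiff ℝ 2 (U t) ∧ ContDiff ℝ 1 (π t) ∧
    (∀ x, vdiv (U t) x = 0) ∧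
    ∀ x, HasDerivAt (fun s => U s x)
      (vlap (U t) x - fderiv ℝ (U t) x (U t x) - gradient (π t) x) t

/-- Membership in the Hölder class `C^{k,θ}(ℝ³)`. -/
def InHolderClass {α : Type*} [NormedAddCommGroup α] [NormedSpace ℝ α]
    (k : ℕ) (θ : ℝ) (f : E3 → α) : Prop :=
  ContDiff ℝ (k : ℕ∞) f ∧ ∃ C : ℝ≥0, HolderWith C θ.toNNReal (iteratedFDeriv ℝ k f)

/-- Hölder seminorm `[f]_θ` (valued in `ℝ≥0∞`). -/
def holderSemi {α β : Type*} [PseudoEMetricSpace α] [NormedAddCommGroup β]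
    (θ : ℝ) (f : α → β) : ℝ≥0∞ :=
  ⨆ x, ⨆ y, (‖f x - f y‖₊ : ℝ≥0∞) / edist x y ^ θ

/-- The heat kernel on `ℝ³`. -/
def heatK (t : ℝ) (z : E3) : ℝ :=
  (4 * Real.pi * t) ^ (-(3:ℝ)/2) * Real.exp (-‖z‖^2 / (4*t))

/-- Convolution of the heat kernel with a vector field: `(H*a)(t,x)`. -/
def heatConv (a : E3 → E3) (t : ℝ) (x : E3) : E3 :=
  ∫ y, heatK t (x - y) • a y

lemma integrable_gauss_E3 {b : ℝ} (hb : 0 < b) :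
    Integrable (fun v : E3 => Real.exp (-b * ‖v‖^2)) := by
  have h := GaussianFourier.integrable_cexp_neg_mul_sq_norm_add (V := E3) (b := (b:ℂ))
    (by simpa using hb) 0 0
  refine h.norm.congr ?_
  filter_upwards with v
  simp [Complex.norm_exp, ← Complex.ofReal_pow]

lemma lintegral_gauss_E3 {b : ℝ} (hb : 0 < b) :
    ∫⁻ z : E3, ENNReal.ofReal (Real.exp (-b * ‖z‖^2)) =
      ENNReal.ofReal ((Real.pi / b) ^ ((3:ℝ)/2)) := by
  rw [← ofReal_integral_eq_lintegral_ofReal (integrable_gauss_E3 hb)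
    (Filter.Eventually.of_forall fun v => (Real.exp_pos _).le)]
  rw [GaussianFourier.integral_rexp_neg_mul_sq_norm hb]
  norm_num

/-- Pointwise bound for the heat semigroup on `L³` data:
`t^{1/2}|(H*U_0)(t,x)| ≤ c‖U_0‖_{L³(B(x,ρ))} + c e^{-ρ²/(8t)}‖U_0‖_3`. -/
theorem heat_pointwise_localized_L3_bound :
    ∃ c : ℝ, 0 < c ∧
      ∀ U0 : E3 → E3, MemLp U0 3 volume →
        ∀ t : ℝ, 0 < t → ∀ ρ : ℝ, 0 < ρ → ∀ x : E3,
          ENNReal.ofReal (Real.sqrt t) * (‖heatConv U0 t x‖₊ : ℝ≥0∞) ≤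
            ENNReal.ofReal c *
                (∫⁻ y in Metric.ball x ρ, (‖U0 y‖₊ : ℝ≥0∞) ^ (3 : ℝ)) ^ (1 / (3 : ℝ)) +
              ENNReal.ofReal (c * Real.exp (-(ρ ^ 2) / (8 * t))) *
                eLpNorm U0 3 volume := by
  have hpi := Real.pi_pos
  refine ⟨(4*Real.pi) ^ (-(3:ℝ)/2) * (16*Real.pi/3), by positivity, ?_⟩
  set c : ℝ := (4*Real.pi) ^ (-(3:ℝ)/2) * (16*Real.pi/3) with hc_def
  have hc : 0 < c := by positivity
  intro U0 hU0 t ht ρ hρ x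
  set A : ℝ := (4*Real.pi*t) ^ (-(3:ℝ)/2) with hA_def
  have hA : 0 < A := by positivity
  set Y : ℝ := A * (16*Real.pi*t/3) with hY_def
  have hY : 0 < Y := by positivity
  set g : E3 → ℝ := fun z => A * Real.exp (-‖z‖^2 / (8*t)) with hg_def
  have hg0 : ∀ z, 0 < g z := fun z => by
    have := Real.exp_pos (-‖z‖^2 / (8*t)); simp only [hg_def]; positivity
  have hgcont : Continuous g := by
    apply continuous_const.mul
    exact Real.continuous_exp.comp ((continuous_norm.pow 2).neg.div_const _)
  have hK0 : ∀ z : E3, 0 ≤ heatK t z := fun z => by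
    unfold heatK; positivity
  have hKg : ∀ z : E3, heatK t z ≤ g z := by
    intro z
    unfold heatK
    refine mul_le_mul_of_nonneg_left (Real.exp_le_exp.2 ?_) hA.le
    rw [neg_div, neg_div, neg_le_neg_iff]
    gcongr
    linarith
  have hKfar : ∀ z : E3, ρ ≤ ‖z‖ → heatK t z ≤ Real.exp (-ρ^2/(8*t)) * g z := by
    intro z hz
    unfold heatK
    have h1 : Real.exp (-‖z‖^2/(4*t)) =
        Real.exp (-‖z‖^2/(8*t)) * Real.exp (-‖z‖^2/(8*t)) := by
      rw [← Real.exp_add]; congr 1; field_simp; ring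
    have h2 : Real.exp (-‖z‖^2/(8*t)) ≤ Real.exp (-ρ^2/(8*t)) := by
      refine Real.exp_le_exp.2 ?_
      rw [neg_div, neg_div, neg_le_neg_iff]
      gcongr
    calc (4*Real.pi*t) ^ (-(3:ℝ)/2) * Real.exp (-‖z‖^2/(4*t))
        = Real.exp (-‖z‖^2/(8*t)) * (A * Real.exp (-‖z‖^2/(8*t))) := by
          rw [h1, hA_def]; ring
      _ ≤ Real.exp (-ρ^2/(8*t)) * (A * Real.exp (-‖z‖^2/(8*t))) :=
          mul_le_mul_of_nonneg_right h2 (by positivity)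
  have hKcont : Continuous (fun z : E3 => heatK t z) := by
    unfold heatK
    exact continuous_const.mul
      (Real.continuous_exp.comp ((continuous_norm.pow 2).neg.div_const _))
  set u : E3 → ℝ≥0∞ := fun y => (‖U0 y‖₊ : ℝ≥0∞) with hu_def
  have hu : AEMeasurable u volume := hU0.1.enorm
  set f : E3 → ℝ≥0∞ := fun y => ENNReal.ofReal (heatK t (x - y)) with hf_def
  have hf : Measurable f :=
    ENNReal.measurable_ofReal.comp
      ((hKcont.comp (continuous_const.sub continuous_id)).measurable)
  set G : E3 → ℝ≥0∞ := fun y => ENNReal.ofReal (g (x - y)) with hG_def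
  have hG : Measurable G :=
    ENNReal.measurable_ofReal.comp
      ((hgcont.comp (continuous_const.sub continuous_id)).measurable)
  have hconj : Real.HolderConjugate (3/2) 3 := ⟨by norm_num, by norm_num, by norm_num⟩
  -- the L^{3/2} norm computation for the dominating Gaussian
  have hGpt : ∀ z : E3, (ENNReal.ofReal (g z)) ^ ((3:ℝ)/2) =
      ENNReal.ofReal (A ^ ((3:ℝ)/2)) *
        ENNReal.ofReal (Real.exp (-(3/(16*t)) * ‖z‖^2)) := by
    intro z
    rw [ENNReal.ofReal_rpow_of_nonneg (hg0 z).le (by norm_num)]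
    rw [hg_def]
    simp only
    rw [Real.mul_rpow hA.le (Real.exp_pos _).le, ← Real.exp_mul]
    rw [ENNReal.ofReal_mul (by positivity)]
    congr 2
    field_simp
    ring
  have hMcalc : ∫⁻ z : E3, (ENNReal.ofReal (g z)) ^ ((3:ℝ)/2) =
      ENNReal.ofReal (Y ^ ((3:ℝ)/2)) := by
    simp_rw [hGpt]
    rw [lintegral_const_mul' _ _ ENNReal.ofReal_ne_top]
    rw [lintegral_gauss_E3 (by positivity)]
    rw [← ENNReal.ofReal_mul (by positivity)]
    congr 1
    rw [hY_def, Real.mul_rpow hA.le (by positivity)]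
    congr 2
    field_simp
  have hM : (∫⁻ z : E3, (ENNReal.ofReal (g z)) ^ ((3:ℝ)/2)) ^ ((2:ℝ)/3) =
      ENNReal.ofReal Y := by
    rw [hMcalc, ← ENNReal.ofReal_rpow_of_nonneg hY.le (by norm_num), ← ENNReal.rpow_mul]
    norm_num
  have htransG : ∫⁻ y : E3, G y ^ ((3:ℝ)/2) =
      ∫⁻ z : E3, (ENNReal.ofReal (g z)) ^ ((3:ℝ)/2) :=
    (Measure.measurePreserving_sub_left volume x).lintegral_comp
      ((ENNReal.continuous_rpow_const.measurable).comp
        (ENNReal.measurable_ofReal.comp hgcont.measurable))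
  have hGnorm : (∫⁻ y : E3, G y ^ ((3:ℝ)/2)) ^ ((2:ℝ)/3) = ENNReal.ofReal Y := by
    rw [htransG, hM]
  have step1 : (‖heatConv U0 t x‖₊ : ℝ≥0∞) ≤ ∫⁻ y, f y * u y := by
    refine le_trans (enorm_integral_le_lintegral_enorm _)
      (le_of_eq (lintegral_congr fun y => ?_))
    rw [enorm_smul, Real.enorm_eq_ofReal (hK0 _)]; rfl
  have hL3 : eLpNorm U0 3 volume = (∫⁻ y, u y ^ (3:ℝ)) ^ (1/(3:ℝ)) := by
    rw [eLpNorm_eq_lintegral_rpow_enorm_toReal (by norm_num) (by norm_num)]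
    norm_num
    rfl
  have hnear : ∫⁻ y in Metric.ball x ρ, f y * u y ≤
      ENNReal.ofReal Y * (∫⁻ y in Metric.ball x ρ, u y ^ (3:ℝ)) ^ (1/(3:ℝ)) := by
    refine le_trans
      (ENNReal.lintegral_mul_le_Lp_mul_Lq _ hconj hf.aemeasurable hu.restrict) ?_
    refine mul_le_mul_left ?_ _
    rw [show (1:ℝ)/(3/2) = 2/3 by norm_num, ← hGnorm]
    refine ENNReal.rpow_le_rpow ?_ (by norm_num)
    refine le_trans (setLIntegral_le_lintegral _ _) (lintegral_mono fun y => ?_)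
    exact ENNReal.rpow_le_rpow (ENNReal.ofReal_le_ofReal (hKg _)) (by norm_num)
  have hfar : ∫⁻ y in (Metric.ball x ρ)ᶜ, f y * u y ≤
      ENNReal.ofReal (Real.exp (-ρ^2/(8*t))) *
        (ENNReal.ofReal Y * (∫⁻ y, u y ^ (3:ℝ)) ^ (1/(3:ℝ))) := by
    have hfg : ∀ y, y ∈ (Metric.ball x ρ)ᶜ → f y * u y ≤
        ENNReal.ofReal (Real.exp (-ρ^2/(8*t))) * (G y * u y) := by
      intro y hy
      have hd : ρ ≤ ‖x - y‖ := by
        have h' : ¬ dist y x < ρ := hy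
        rw [dist_eq_norm] at h'
        rw [norm_sub_rev]
        linarith [not_lt.1 h']
      rw [← mul_assoc]
      refine mul_le_mul_left ?_ _
      rw [hf_def, hG_def]
      simp only
      rw [← ENNReal.ofReal_mul (Real.exp_pos _).le]
      exact ENNReal.ofReal_le_ofReal (hKfar _ hd)
    calc ∫⁻ y in (Metric.ball x ρ)ᶜ, f y * u y
        ≤ ∫⁻ y in (Metric.ball x ρ)ᶜ,
            ENNReal.ofReal (Real.exp (-ρ^2/(8*t))) * (G y * u y) :=
          lintegral_mono_ae ((ae_restrict_iff' measurableSet_ball.compl).2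
            (Filter.Eventually.of_forall hfg))
      _ = ENNReal.ofReal (Real.exp (-ρ^2/(8*t))) *
            ∫⁻ y in (Metric.ball x ρ)ᶜ, G y * u y :=
          lintegral_const_mul' _ _ ENNReal.ofReal_ne_top
      _ ≤ ENNReal.ofReal (Real.exp (-ρ^2/(8*t))) * ∫⁻ y, G y * u y :=
          mul_le_mul_right (setLIntegral_le_lintegral _ _) _
      _ ≤ _ := by
          refine mul_le_mul_right ?_ _
          refine le_trans
            (ENNReal.lintegral_mul_le_Lp_mul_Lq _ hconj hG.aemeasurable hu) ?_
          refine mul_le_mul_left ?_ _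
          rw [show (1:ℝ)/(3/2) = 2/3 by norm_num, hGnorm]
  have hkeyR : Real.sqrt t * Y = c := by
    rw [hY_def, hA_def, hc_def]
    rw [Real.mul_rpow (by positivity) ht.le]
    have h1 : Real.sqrt t * t ^ (-(3:ℝ)/2) * t = 1 := by
      rw [Real.sqrt_eq_rpow]
      nth_rewrite 3 [← Real.rpow_one t]
      rw [← Real.rpow_add ht, ← Real.rpow_add ht]
      norm_num
    linear_combination ((4*Real.pi) ^ (-(3:ℝ)/2) * (16*Real.pi/3)) * h1
  have hstY : ENNReal.ofReal (Real.sqrt t) * ENNReal.ofReal Y = ENNReal.ofReal c := by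
    rw [← ENNReal.ofReal_mul (Real.sqrt_nonneg t), hkeyR]
  calc ENNReal.ofReal (Real.sqrt t) * (‖heatConv U0 t x‖₊ : ℝ≥0∞)
      ≤ ENNReal.ofReal (Real.sqrt t) * ∫⁻ y, f y * u y := mul_le_mul_right step1 _
    _ = ENNReal.ofReal (Real.sqrt t) *
        ((∫⁻ y in Metric.ball x ρ, f y * u y) +
          ∫⁻ y in (Metric.ball x ρ)ᶜ, f y * u y) := by
        rw [lintegral_add_compl _ measurableSet_ball]
    _ ≤ ENNReal.ofReal (Real.sqrt t) *
        (ENNReal.ofReal Y * (∫⁻ y in Metric.ball x ρ, u y ^ (3:ℝ)) ^ (1/(3:ℝ)) +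
          ENNReal.ofReal (Real.exp (-ρ^2/(8*t))) *
            (ENNReal.ofReal Y * (∫⁻ y, u y ^ (3:ℝ)) ^ (1/(3:ℝ)))) :=
        mul_le_mul_right (add_le_add hnear hfar) _
    _ = ENNReal.ofReal c *
          (∫⁻ y in Metric.ball x ρ, (‖U0 y‖₊ : ℝ≥0∞) ^ (3 : ℝ)) ^ (1 / (3 : ℝ)) +
        ENNReal.ofReal (c * Real.exp (-(ρ ^ 2) / (8 * t))) * eLpNorm U0 3 volume := by
        rw [hL3, ENNReal.ofReal_mul hc.le, ← hstY]
        simp only [hu_def]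
        ring
end
end

section
/- Let T>0 and let a, b be measurable functions on (0,T)×ℝ³ with sup_{0<t<T}(‖a(t)‖_3 + ‖b(t)‖_3) < ∞. Then for every k>0 there exists a constant c, independent of a and b, such that for all ρ>0, all t ∈ (0,T) and all x ∈ ℝ³: ∫_0^{t/2} ∫_{ℝ³} |a(τ,y)||b(τ,y)| / (|x−y| + (t−τ)^{1/2})^{3+k} dy dτ ≤ c t^{−k/2} [ sup_{0<τ<t} ‖|a(τ)||b(τ)|‖_{3/2,ρ} + t ρ^{−2} sup_{0<τ<t} ‖|a(τ)||b(τ)|‖_{3/2} ]. -/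
open MeasureTheory ENNReal Metric Set Filter
open scoped Topology NNReal

noncomputable section

lemma E3_finrank : Module.finrank ℝ E3 = 3 := finrank_euclideanSpace_fin

lemma lintegral_comp_smul_E3 (f : E3 → ℝ≥0∞) (hf : Measurable f) {s : ℝ} (hs : 0 < s) :
    ∫⁻ y, f y = ENNReal.ofReal (s ^ (3:ℕ)) * ∫⁻ w, f (s • w) := by
  have h1 : ∫⁻ w, f (s • w) = ∫⁻ y, f y ∂(Measure.map (s • ·) volume) :=
    (lintegral_map hf (measurable_const_smul s)).symm
  rw [Measure.map_addHaar_smul volume hs.ne', E3_finrank, lintegral_smul_measure] at h1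
  rw [h1, smul_eq_mul, ← mul_assoc]
  rw [← ENNReal.ofReal_mul (by positivity), abs_of_pos (by positivity),
    mul_inv_cancel₀ (by positivity), ENNReal.ofReal_one, one_mul]

lemma measurable_kernel (x : E3) (s m : ℝ) :
    Measurable fun y : E3 => (ENNReal.ofReal ((‖x - y‖ + s) ^ m))⁻¹ := by fun_prop

lemma near_kernel (m : ℝ) (hm : 3 < m) : ∃ C : ℝ, 0 < C ∧ ∀ s : ℝ, 0 < s →
    (∫⁻ z : E3, (ENNReal.ofReal ((‖z‖ + s) ^ m))⁻¹) ≤ ENNReal.ofReal (C * s ^ ((3:ℝ) - m)) := by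
  set I : ℝ≥0∞ := ∫⁻ w : E3, ENNReal.ofReal ((1 + ‖w‖) ^ (-m)) with hIdef
  have hI : I < ⊤ := finite_integral_one_add_norm (by rw [E3_finrank]; exact_mod_cast hm)
  refine ⟨I.toReal + 1, by positivity, ?_⟩
  intro s hs
  have hmeas : Measurable fun z : E3 => (ENNReal.ofReal ((‖z‖ + s) ^ m))⁻¹ := by fun_prop
  rw [lintegral_comp_smul_E3 _ hmeas hs]
  have hpt : ∀ w : E3, (ENNReal.ofReal ((‖s • w‖ + s) ^ m))⁻¹ =
      ENNReal.ofReal (s ^ (-m)) * ENNReal.ofReal ((1 + ‖w‖) ^ (-m)) := by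
    intro w
    have h1 : ‖s • w‖ + s = s * (1 + ‖w‖) := by
      rw [norm_smul, Real.norm_eq_abs, abs_of_pos hs]; ring
    have h2 : (0:ℝ) < 1 + ‖w‖ := by positivity
    rw [h1, Real.mul_rpow hs.le h2.le, ← ENNReal.ofReal_inv_of_pos (by positivity),
      mul_inv, ← Real.rpow_neg hs.le, ← Real.rpow_neg h2.le, ENNReal.ofReal_mul (by positivity)]
  simp only [hpt]
  rw [lintegral_const_mul' _ _ ENNReal.ofReal_ne_top, ← hIdef, ← mul_assoc]
  have h3 : ENNReal.ofReal (s ^ (3:ℕ)) * ENNReal.ofReal (s ^ (-m)) =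
      ENNReal.ofReal (s ^ ((3:ℝ) - m)) := by
    rw [← ENNReal.ofReal_mul (by positivity), ← Real.rpow_natCast s 3,
      ← Real.rpow_add hs]
    norm_num [sub_eq_add_neg]
  rw [h3]
  calc ENNReal.ofReal (s ^ ((3:ℝ) - m)) * I
      ≤ ENNReal.ofReal (s ^ ((3:ℝ) - m)) * ENNReal.ofReal (I.toReal + 1) := by
        gcongr
        calc I = ENNReal.ofReal I.toReal := (ENNReal.ofReal_toReal hI.ne).symm
          _ ≤ _ := ENNReal.ofReal_le_ofReal (by linarith)
    _ = ENNReal.ofReal ((I.toReal + 1) * s ^ ((3:ℝ) - m)) := by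
        rw [← ENNReal.ofReal_mul (by positivity), mul_comm]

lemma far_kernel : ∃ C : ℝ, 0 < C ∧ ∀ ρ : ℝ, 0 < ρ →
    (∫⁻ z : E3 in (ball (0:E3) ρ)ᶜ, (ENNReal.ofReal (‖z‖ ^ (9:ℝ)))⁻¹) ≤
      ENNReal.ofReal (C * ρ ^ (-(6:ℝ))) := by
  set g : E3 → ℝ≥0∞ := ((ball (0:E3) 1)ᶜ).indicator
    (fun z => (ENNReal.ofReal (‖z‖ ^ (9:ℝ)))⁻¹) with hgdef
  have hg_meas : Measurable g := by
    apply Measurable.indicator ?_ measurableSet_ball.compl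
    fun_prop
  set K : ℝ≥0∞ := ∫⁻ z, g z with hKdef
  have hK : K < ⊤ := by
    have hbound : ∀ z : E3, g z ≤
        ENNReal.ofReal (2 ^ (9:ℝ)) * ENNReal.ofReal ((1 + ‖z‖) ^ (-(9:ℝ))) := by
      intro z
      rw [hgdef]
      by_cases hz : z ∈ (ball (0:E3) 1)ᶜ
      · rw [Set.indicator_of_mem hz]
        have h1 : (1:ℝ) ≤ ‖z‖ := by
          simpa [mem_ball, dist_zero_right] using hz
        have hz0 : (0:ℝ) < ‖z‖ := by linarith
        rw [← ENNReal.ofReal_inv_of_pos (by positivity), ← Real.rpow_neg hz0.le,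
          ← ENNReal.ofReal_mul (by positivity)]
        apply ENNReal.ofReal_le_ofReal
        have hle : (1:ℝ) + ‖z‖ ≤ 2 * ‖z‖ := by linarith
        calc ‖z‖ ^ (-(9:ℝ)) = 2 ^ (9:ℝ) * ((2*‖z‖) ^ (-(9:ℝ))) := by
              rw [Real.mul_rpow (by norm_num) (norm_nonneg z), ← mul_assoc,
                ← Real.rpow_add (by norm_num : (0:ℝ) < 2)]
              norm_num
          _ ≤ 2 ^ (9:ℝ) * ((1 + ‖z‖) ^ (-(9:ℝ))) := by
              have := Real.rpow_le_rpow_of_nonpos (by positivity : (0:ℝ) < 1 + ‖z‖)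
                hle (by norm_num : (-(9:ℝ)) ≤ 0)
              gcongr
      · rw [Set.indicator_of_notMem hz]
        exact zero_le
    calc K ≤ ∫⁻ z : E3, ENNReal.ofReal (2 ^ (9:ℝ)) *
          ENNReal.ofReal ((1 + ‖z‖) ^ (-(9:ℝ))) := lintegral_mono hbound
      _ = ENNReal.ofReal (2 ^ (9:ℝ)) * ∫⁻ z : E3, ENNReal.ofReal ((1 + ‖z‖) ^ (-(9:ℝ))) :=
          lintegral_const_mul' _ _ ENNReal.ofReal_ne_top
      _ < ⊤ := by
          apply ENNReal.mul_lt_top ENNReal.ofReal_lt_top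
          exact finite_integral_one_add_norm (by rw [E3_finrank]; norm_num)
  refine ⟨K.toReal + 1, by positivity, ?_⟩
  intro ρ hρ
  have hmeas : Measurable fun z : E3 =>
      ((ball (0:E3) ρ)ᶜ).indicator (fun z => (ENNReal.ofReal (‖z‖ ^ (9:ℝ)))⁻¹) z := by
    apply Measurable.indicator ?_ measurableSet_ball.compl
    fun_prop
  rw [← lintegral_indicator measurableSet_ball.compl,
    lintegral_comp_smul_E3 _ hmeas hρ]
  have hpt : ∀ w : E3, ((ball (0:E3) ρ)ᶜ).indicator
      (fun z => (ENNReal.ofReal (‖z‖ ^ (9:ℝ)))⁻¹) (ρ • w) =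
      ENNReal.ofReal (ρ ^ (-(9:ℝ))) * g w := by
    intro w
    have hnorm : ‖ρ • w‖ = ρ * ‖w‖ := by
      rw [norm_smul, Real.norm_eq_abs, abs_of_pos hρ]
    by_cases hw : w ∈ (ball (0:E3) 1)ᶜ
    · have h1 : (1:ℝ) ≤ ‖w‖ := by simpa [mem_ball, dist_zero_right] using hw
      have hmem : ρ • w ∈ (ball (0:E3) ρ)ᶜ := by
        simp only [mem_compl_iff, mem_ball, dist_zero_right, not_lt, hnorm]
        nlinarith
      rw [Set.indicator_of_mem hmem, hgdef, Set.indicator_of_mem hw, hnorm,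
        Real.mul_rpow hρ.le (norm_nonneg w)]
      rw [← ENNReal.ofReal_inv_of_pos (by positivity), mul_inv,
        ← Real.rpow_neg hρ.le, ENNReal.ofReal_mul (by positivity)]
      congr 1
      have hwpos : (0:ℝ) < ‖w‖ := by linarith
      rw [← Real.rpow_neg hwpos.le, ← ENNReal.ofReal_inv_of_pos (by positivity),
        ← Real.rpow_neg hwpos.le]
    · have h1 : ‖w‖ < 1 := by
        by_contra h
        exact hw (by simpa [mem_ball, dist_zero_right] using h)
      have hmem : ρ • w ∉ (ball (0:E3) ρ)ᶜ := by
        simp only [mem_compl_iff, mem_ball, dist_zero_right, not_not, hnorm]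
        nlinarith
      rw [Set.indicator_of_notMem hmem, hgdef, Set.indicator_of_notMem hw, mul_zero]
  simp only [hpt]
  rw [lintegral_const_mul' _ _ ENNReal.ofReal_ne_top, ← hKdef, ← mul_assoc]
  have h3 : ENNReal.ofReal (ρ ^ (3:ℕ)) * ENNReal.ofReal (ρ ^ (-(9:ℝ))) =
      ENNReal.ofReal (ρ ^ (-(6:ℝ))) := by
    rw [← ENNReal.ofReal_mul (by positivity), ← Real.rpow_natCast ρ 3, ← Real.rpow_add hρ]
    norm_num
  rw [h3]
  calc ENNReal.ofReal (ρ ^ (-(6:ℝ))) * K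
      ≤ ENNReal.ofReal (ρ ^ (-(6:ℝ))) * ENNReal.ofReal (K.toReal + 1) := by
        gcongr
        calc K = ENNReal.ofReal K.toReal := (ENNReal.ofReal_toReal hK.ne).symm
          _ ≤ _ := ENNReal.ofReal_le_ofReal (by linarith)
    _ = ENNReal.ofReal ((K.toReal + 1) * ρ ^ (-(6:ℝ))) := by
        rw [← ENNReal.ofReal_mul (by positivity), mul_comm]


lemma per_slice (k : ℝ) (hk : 0 < k) : ∃ c₁ c₂ : ℝ, 0 < c₁ ∧ 0 < c₂ ∧
    ∀ (f : E3 → ℝ), Measurable f → ∀ (x : E3) (ρ s : ℝ), 0 < ρ → 0 < s →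
    (∫⁻ y, (‖f y‖₊ : ℝ≥0∞) * (ENNReal.ofReal ((‖x - y‖ + s) ^ ((3:ℝ) + k)))⁻¹) ≤
      ENNReal.ofReal (c₁ * s ^ (-(2 + k))) * locLp (3 / 2) ρ f
        + ENNReal.ofReal (c₂ * s ^ (-k) * ρ ^ (-(2:ℝ))) * eLpNorm f (3 / 2) volume := by
  obtain ⟨C₁, hC₁, hnear⟩ := near_kernel ((3 + k) * 3) (by nlinarith)
  obtain ⟨C₂, hC₂, hfar⟩ := far_kernel
  refine ⟨C₁ ^ ((1:ℝ)/3), C₂ ^ ((1:ℝ)/3), by positivity, by positivity, ?_⟩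
  intro f hf x ρ s hρ hs
  have hconj : Real.HolderConjugate (3/2) 3 := ⟨by norm_num, by norm_num, by norm_num⟩
  set f1 : E3 → ℝ≥0∞ := fun y => (‖f y‖₊ : ℝ≥0∞) with hf1def
  set g : E3 → ℝ≥0∞ := fun y => (ENNReal.ofReal ((‖x - y‖ + s) ^ ((3:ℝ) + k)))⁻¹ with hgdef
  have hf1m : Measurable f1 := hf.nnnorm.coe_nnreal_ennreal
  have hgm : Measurable g := by rw [hgdef]; fun_prop
  have hbase : ∀ y : E3, (0:ℝ) < ‖x - y‖ + s :=
    fun y => add_pos_of_nonneg_of_pos (norm_nonneg _) hs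
  -- Near part
  have hnear_est : (∫⁻ y in ball x ρ, f1 y * g y) ≤
      ENNReal.ofReal (C₁ ^ ((1:ℝ)/3) * s ^ (-(2 + k))) * locLp (3 / 2) ρ f := by
    have hHold := ENNReal.lintegral_mul_le_Lp_mul_Lq (volume.restrict (ball x ρ)) hconj
      hf1m.aemeasurable hgm.aemeasurable
    simp only [Pi.mul_apply] at hHold
    refine le_trans hHold ?_
    rw [mul_comm]
    refine mul_le_mul' ?_ ?_
    · -- kernel part
      have hg3 : ∀ y : E3, g y ^ (3:ℝ) =
          (ENNReal.ofReal ((‖x - y‖ + s) ^ ((3 + k) * 3)))⁻¹ := by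
        intro y
        rw [hgdef, ENNReal.inv_rpow, ENNReal.ofReal_rpow_of_pos (Real.rpow_pos_of_pos (hbase y) _),
          ← Real.rpow_mul (hbase y).le]
      have hexp : ((3:ℝ) - (3 + k) * 3) * (1/3) = -(2 + k) := by ring
      calc (∫⁻ y in ball x ρ, g y ^ (3:ℝ)) ^ (1/(3:ℝ))
          ≤ (∫⁻ y, g y ^ (3:ℝ)) ^ (1/(3:ℝ)) :=
            ENNReal.rpow_le_rpow (setLIntegral_le_lintegral _ _) (by norm_num)
        _ = (∫⁻ z : E3, (ENNReal.ofReal ((‖z‖ + s) ^ ((3 + k) * 3)))⁻¹) ^ (1/(3:ℝ)) := by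
            simp only [hg3]
            congr 1
            exact (Measure.measurePreserving_sub_left volume x).lintegral_comp
              (f := fun z : E3 => (ENNReal.ofReal ((‖z‖ + s) ^ ((3 + k) * 3)))⁻¹) (by fun_prop)
        _ ≤ (ENNReal.ofReal (C₁ * s ^ ((3:ℝ) - (3 + k) * 3))) ^ (1/(3:ℝ)) :=
            ENNReal.rpow_le_rpow (hnear s hs) (by norm_num)
        _ = ENNReal.ofReal ((C₁ * s ^ ((3:ℝ) - (3 + k) * 3)) ^ ((1:ℝ)/3)) :=
            ENNReal.ofReal_rpow_of_pos (by positivity)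
        _ = ENNReal.ofReal (C₁ ^ ((1:ℝ)/3) * s ^ (-(2 + k))) := by
            rw [Real.mul_rpow hC₁.le (by positivity), ← Real.rpow_mul hs.le, hexp]
    · -- locLp part
      exact le_iSup (fun x' : E3 =>
        (∫⁻ y in Metric.ball x' ρ, (‖f y‖₊ : ℝ≥0∞) ^ ((3:ℝ)/2)) ^ (1 / ((3:ℝ)/2))) x
  -- Far part
  have p32_ne_zero : (3/2 : ℝ≥0∞) ≠ 0 := by norm_num
  have p32_ne_top : (3/2 : ℝ≥0∞) ≠ ⊤ := (ENNReal.div_lt_top (by norm_num) (by norm_num)).ne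
  have p32_toReal : (3/2 : ℝ≥0∞).toReal = 3/2 := by norm_num
  have hfar_est : (∫⁻ y in (ball x ρ)ᶜ, f1 y * g y) ≤
      ENNReal.ofReal (C₂ ^ ((1:ℝ)/3) * s ^ (-k) * ρ ^ (-(2:ℝ))) * eLpNorm f (3 / 2) volume := by
    set h : E3 → ℝ≥0∞ := fun y => (ENNReal.ofReal (‖x - y‖ ^ (3:ℝ)))⁻¹ with hhdef
    have hhm : Measurable h := by rw [hhdef]; fun_prop
    have hgh : ∀ y : E3, g y ≤ ENNReal.ofReal (s ^ (-k)) * h y := by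
      intro y
      have hsk : (0:ℝ) < s ^ k := Real.rpow_pos_of_pos hs k
      simp only [hgdef, hhdef]
      rw [Real.rpow_neg hs.le,
        ENNReal.ofReal_inv_of_pos hsk, ← ENNReal.mul_inv (Or.inr ENNReal.ofReal_ne_top)
          (Or.inl ENNReal.ofReal_ne_top), ← ENNReal.ofReal_mul hsk.le]
      apply ENNReal.inv_le_inv.mpr
      apply ENNReal.ofReal_le_ofReal
      have h1 : (‖x - y‖ + s) ^ ((3:ℝ) + k) =
          (‖x - y‖ + s) ^ (3:ℝ) * (‖x - y‖ + s) ^ k := Real.rpow_add (hbase y) 3 k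
      rw [h1]
      have h2 : s ^ k ≤ (‖x - y‖ + s) ^ k :=
        Real.rpow_le_rpow hs.le (by linarith [norm_nonneg (x - y)]) hk.le
      have h3 : ‖x - y‖ ^ (3:ℝ) ≤ (‖x - y‖ + s) ^ (3:ℝ) :=
        Real.rpow_le_rpow (norm_nonneg _) (by linarith) (by norm_num)
      calc s ^ k * ‖x - y‖ ^ (3:ℝ) ≤ (‖x - y‖ + s) ^ k * (‖x - y‖ + s) ^ (3:ℝ) := by
            apply mul_le_mul h2 h3 (by positivity) (by positivity)
        _ = (‖x - y‖ + s) ^ (3:ℝ) * (‖x - y‖ + s) ^ k := mul_comm _ _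
    calc (∫⁻ y in (ball x ρ)ᶜ, f1 y * g y)
        ≤ ∫⁻ y in (ball x ρ)ᶜ, ENNReal.ofReal (s ^ (-k)) * (f1 y * h y) := by
          apply lintegral_mono
          intro y
          beta_reduce
          rw [mul_left_comm]
          exact mul_le_mul_right (hgh y) (f1 y)
      _ = ENNReal.ofReal (s ^ (-k)) * ∫⁻ y in (ball x ρ)ᶜ, f1 y * h y :=
          lintegral_const_mul' _ _ ENNReal.ofReal_ne_top
      _ ≤ ENNReal.ofReal (s ^ (-k)) *
            (eLpNorm f (3 / 2) volume * ENNReal.ofReal (C₂ ^ ((1:ℝ)/3) * ρ ^ (-(2:ℝ)))) := by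
          apply mul_le_mul_right
          have hHold := ENNReal.lintegral_mul_le_Lp_mul_Lq
            (volume.restrict ((ball x ρ)ᶜ)) hconj hf1m.aemeasurable hhm.aemeasurable
          simp only [Pi.mul_apply] at hHold
          refine le_trans hHold (mul_le_mul' ?_ ?_)
          · -- eLpNorm part
            rw [eLpNorm_eq_lintegral_rpow_enorm_toReal p32_ne_zero p32_ne_top, p32_toReal]
            exact ENNReal.rpow_le_rpow (setLIntegral_le_lintegral _ _) (by norm_num)
          · -- far kernel part
            have hh3 : ∀ y : E3, h y ^ (3:ℝ) =
                (ENNReal.ofReal (‖x - y‖ ^ (9:ℝ)))⁻¹ := by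
              intro y
              rw [hhdef, ENNReal.inv_rpow,
                ENNReal.ofReal_rpow_of_nonneg (by positivity) (by norm_num),
                ← Real.rpow_mul (norm_nonneg _)]
              norm_num
            have himg : (fun y : E3 => x - y) '' (ball x ρ)ᶜ = (ball (0:E3) ρ)ᶜ := by
              ext z
              simp only [mem_image, mem_compl_iff, mem_ball, dist_eq_norm, not_lt,
                sub_zero]
              constructor
              · rintro ⟨y, hy, rfl⟩
                rwa [norm_sub_rev] at hy
              · intro hz
                refine ⟨x - z, by simpa using hz, by abel⟩
            have htrans : (∫⁻ y in (ball x ρ)ᶜ, (ENNReal.ofReal (‖x - y‖ ^ (9:ℝ)))⁻¹) =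
                ∫⁻ z in (ball (0:E3) ρ)ᶜ, (ENNReal.ofReal (‖z‖ ^ (9:ℝ)))⁻¹ := by
              rw [← himg]
              exact (Measure.measurePreserving_sub_left volume x).setLIntegral_comp_emb
                (MeasurableEquiv.subLeft x).measurableEmbedding
                (fun z : E3 => (ENNReal.ofReal (‖z‖ ^ (9:ℝ)))⁻¹) ((ball x ρ)ᶜ)
            calc (∫⁻ y in (ball x ρ)ᶜ, h y ^ (3:ℝ)) ^ (1/(3:ℝ))
                = (∫⁻ z in (ball (0:E3) ρ)ᶜ, (ENNReal.ofReal (‖z‖ ^ (9:ℝ)))⁻¹) ^ (1/(3:ℝ)) := by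
                  simp only [hh3]; rw [htrans]
              _ ≤ (ENNReal.ofReal (C₂ * ρ ^ (-(6:ℝ)))) ^ (1/(3:ℝ)) :=
                  ENNReal.rpow_le_rpow (hfar ρ hρ) (by norm_num)
              _ = ENNReal.ofReal ((C₂ * ρ ^ (-(6:ℝ))) ^ ((1:ℝ)/3)) :=
                  ENNReal.ofReal_rpow_of_pos (by positivity)
              _ = ENNReal.ofReal (C₂ ^ ((1:ℝ)/3) * ρ ^ (-(2:ℝ))) := by
                  rw [Real.mul_rpow hC₂.le (by positivity), ← Real.rpow_mul hρ.le]
                  norm_num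
      _ = ENNReal.ofReal (C₂ ^ ((1:ℝ)/3) * s ^ (-k) * ρ ^ (-(2:ℝ))) * eLpNorm f (3 / 2) volume := by
          rw [mul_comm (eLpNorm f (3/2) volume), ← mul_assoc,
            ← ENNReal.ofReal_mul (by positivity)]
          congr 2
          ring
  calc (∫⁻ y, f1 y * g y)
      = (∫⁻ y in ball x ρ, f1 y * g y) + ∫⁻ y in (ball x ρ)ᶜ, f1 y * g y :=
        (lintegral_add_compl _ measurableSet_ball).symm
    _ ≤ _ := add_le_add hnear_est hfar_est

/-- Localized estimate for the singular convolution-type integral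
`∫_0^{t/2}∫ |a||b| / (|x-y|+(t-τ)^{1/2})^{3+k}`. -/
theorem singular_integral_localized_bound (T : ℝ) (hT : 0 < T) (k : ℝ) (hk : 0 < k) :
    ∃ c : ℝ, 0 < c ∧
      ∀ a b : ℝ → E3 → ℝ,
        Measurable (Function.uncurry a) → Measurable (Function.uncurry b) →
        (⨆ t ∈ Set.Ioo (0 : ℝ) T,
            (eLpNorm (a t) 3 volume + eLpNorm (b t) 3 volume)) < ⊤ →
        ∀ ρ : ℝ, 0 < ρ → ∀ t ∈ Set.Ioo (0 : ℝ) T, ∀ x : E3,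
          (∫⁻ τ in Set.Ioo 0 (t / 2), ∫⁻ y,
              ENNReal.ofReal (|a τ y| * |b τ y|) /
                ENNReal.ofReal ((‖x - y‖ + Real.sqrt (t - τ)) ^ ((3 : ℝ) + k))) ≤
            ENNReal.ofReal (c * t ^ (-(k / 2))) *
              ((⨆ τ ∈ Set.Ioo (0 : ℝ) t, locLp (3 / 2) ρ (fun y => a τ y * b τ y)) +
                ENNReal.ofReal (t / ρ ^ 2) *
                  ⨆ τ ∈ Set.Ioo (0 : ℝ) t,
                    eLpNorm (fun y => a τ y * b τ y) (3 / 2) volume) := by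
  obtain ⟨c₁, c₂, hc₁, hc₂, hps⟩ := per_slice k hk
  set c := (c₁ + c₂) * 2 ^ (k/2) + 1 with hcdef
  have hQ : (0:ℝ) < 2 ^ (k/2) := Real.rpow_pos_of_pos two_pos _
  have hc : 0 < c := by positivity
  refine ⟨c, hc, ?_⟩
  intro a b ha hb _ ρ hρ t ht x
  obtain ⟨ht0, htT⟩ := ht
  set s := Real.sqrt (t/2) with hsdef
  have hu : (0:ℝ) < t/2 := by linarith
  have hs : 0 < s := Real.sqrt_pos.mpr hu
  have hP : (0:ℝ) < t ^ (-(k/2)) := Real.rpow_pos_of_pos ht0 _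
  have hR : (0:ℝ) < ρ ^ (-(2:ℝ)) := Real.rpow_pos_of_pos hρ _
  set L := ⨆ τ ∈ Set.Ioo (0:ℝ) t, locLp (3/2) ρ (fun y => a τ y * b τ y) with hLdef
  set M := ⨆ τ ∈ Set.Ioo (0:ℝ) t, eLpNorm (fun y => a τ y * b τ y) (3/2) volume with hMdef
  -- Step 1: per-slice bound, uniform in τ
  have key : ∀ τ ∈ Set.Ioo (0:ℝ) (t/2),
      (∫⁻ y, ENNReal.ofReal (|a τ y| * |b τ y|) /
        ENNReal.ofReal ((‖x - y‖ + Real.sqrt (t - τ)) ^ ((3:ℝ) + k))) ≤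
      ENNReal.ofReal (c₁ * s ^ (-(2+k))) * L
        + ENNReal.ofReal (c₂ * s ^ (-k) * ρ ^ (-(2:ℝ))) * M := by
    intro τ hτ
    have hτt : τ ∈ Set.Ioo (0:ℝ) t := ⟨hτ.1, by linarith [hτ.2]⟩
    have hfm : Measurable (fun y => a τ y * b τ y) :=
      (ha.of_uncurry_left).mul (hb.of_uncurry_left)
    have hsle : s ≤ Real.sqrt (t - τ) := Real.sqrt_le_sqrt (by linarith [hτ.2])
    have step1 : ∀ y : E3, ENNReal.ofReal (|a τ y| * |b τ y|) /
        ENNReal.ofReal ((‖x - y‖ + Real.sqrt (t - τ)) ^ ((3:ℝ) + k)) ≤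
        (‖(fun y => a τ y * b τ y) y‖₊ : ℝ≥0∞) *
          (ENNReal.ofReal ((‖x - y‖ + s) ^ ((3:ℝ) + k)))⁻¹ := by
      intro y
      have hnum : ENNReal.ofReal (|a τ y| * |b τ y|) =
          (‖(fun y => a τ y * b τ y) y‖₊ : ℝ≥0∞) := by
        beta_reduce
        rw [← enorm_eq_nnnorm, Real.enorm_eq_ofReal_abs, abs_mul]
      rw [hnum, div_eq_mul_inv]
      apply mul_le_mul_right
      apply ENNReal.inv_le_inv.mpr
      apply ENNReal.ofReal_le_ofReal
      apply Real.rpow_le_rpow (by positivity) (by linarith) (by positivity)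
    calc (∫⁻ y, ENNReal.ofReal (|a τ y| * |b τ y|) /
          ENNReal.ofReal ((‖x - y‖ + Real.sqrt (t - τ)) ^ ((3:ℝ) + k)))
        ≤ ∫⁻ y, (‖(fun y => a τ y * b τ y) y‖₊ : ℝ≥0∞) *
            (ENNReal.ofReal ((‖x - y‖ + s) ^ ((3:ℝ) + k)))⁻¹ := lintegral_mono step1
      _ ≤ ENNReal.ofReal (c₁ * s ^ (-(2+k))) * locLp (3/2) ρ (fun y => a τ y * b τ y)
            + ENNReal.ofReal (c₂ * s ^ (-k) * ρ ^ (-(2:ℝ))) *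
              eLpNorm (fun y => a τ y * b τ y) (3/2) volume :=
          hps _ hfm x ρ s hρ hs
      _ ≤ _ := by
          apply add_le_add
          · exact mul_le_mul_right
              (le_biSup (fun τ' => locLp (3/2) ρ (fun y => a τ' y * b τ' y)) hτt) _
          · exact mul_le_mul_right
              (le_biSup (fun τ' => eLpNorm (fun y => a τ' y * b τ' y) (3/2) volume) hτt) _
  -- Step 2: integrate in τ
  have step2 : (∫⁻ τ in Set.Ioo 0 (t / 2), ∫⁻ y,
      ENNReal.ofReal (|a τ y| * |b τ y|) /
        ENNReal.ofReal ((‖x - y‖ + Real.sqrt (t - τ)) ^ ((3 : ℝ) + k))) ≤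
      ENNReal.ofReal (t/2) * (ENNReal.ofReal (c₁ * s ^ (-(2+k))) * L
        + ENNReal.ofReal (c₂ * s ^ (-k) * ρ ^ (-(2:ℝ))) * M) := by
    calc (∫⁻ τ in Set.Ioo 0 (t / 2), ∫⁻ y,
        ENNReal.ofReal (|a τ y| * |b τ y|) /
          ENNReal.ofReal ((‖x - y‖ + Real.sqrt (t - τ)) ^ ((3 : ℝ) + k)))
        ≤ ∫⁻ _ in Set.Ioo 0 (t / 2), (ENNReal.ofReal (c₁ * s ^ (-(2+k))) * L
            + ENNReal.ofReal (c₂ * s ^ (-k) * ρ ^ (-(2:ℝ))) * M) := by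
          refine lintegral_mono_ae ?_
          filter_upwards [ae_restrict_mem measurableSet_Ioo] with τ hτ using key τ hτ
      _ = ENNReal.ofReal (t/2) * (ENNReal.ofReal (c₁ * s ^ (-(2+k))) * L
            + ENNReal.ofReal (c₂ * s ^ (-k) * ρ ^ (-(2:ℝ))) * M) := by
          rw [setLIntegral_const, Real.volume_Ioo, sub_zero, mul_comm]
  refine le_trans step2 ?_
  -- Step 3: arithmetic of the constants
  have hskk : s ^ (-k) = 2 ^ (k/2) * t ^ (-(k/2)) := by
    rw [hsdef, Real.sqrt_eq_rpow, ← Real.rpow_mul hu.le]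
    have h2 : (1/2 : ℝ) * (-k) = -(k/2) := by ring
    rw [h2, Real.div_rpow ht0.le (by norm_num : (0:ℝ) ≤ 2),
      Real.rpow_neg (by norm_num : (0:ℝ) ≤ 2), div_eq_mul_inv, inv_inv, mul_comm]
  have hs2k : s ^ (-(2+k)) = (2/t) * (2 ^ (k/2) * t ^ (-(k/2))) := by
    have hexp : -((2:ℝ)+k) = (-(2:ℝ)) + (-k) := by ring
    rw [hexp, Real.rpow_add hs, hskk]
    congr 1
    rw [Real.rpow_neg hs.le, show (2:ℝ) = ((2:ℕ):ℝ) by norm_num, Real.rpow_natCast,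
      hsdef, Real.sq_sqrt hu.le, inv_div]
    norm_num
  have h_i : t/2 * (c₁ * s ^ (-(2+k))) ≤ c * t ^ (-(k/2)) := by
    rw [hs2k, hcdef]
    have hid : t/2 * (c₁ * ((2/t) * (2 ^ (k/2) * t ^ (-(k/2))))) =
        c₁ * 2 ^ (k/2) * t ^ (-(k/2)) := by
      field_simp
    rw [hid]
    nlinarith [mul_pos (mul_pos hc₂ hQ) hP, hP, mul_pos (mul_pos hc₁ hQ) hP]
  have hrw : t / ρ ^ 2 = t * ρ ^ (-(2:ℝ)) := by
    rw [Real.rpow_neg hρ.le, show (2:ℝ) = ((2:ℕ):ℝ) by norm_num, Real.rpow_natCast,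
      div_eq_mul_inv]
  have h_ii : t/2 * (c₂ * s ^ (-k) * ρ ^ (-(2:ℝ))) ≤ c * t ^ (-(k/2)) * (t / ρ ^ 2) := by
    rw [hskk, hcdef, hrw]
    nlinarith [mul_pos (mul_pos (mul_pos (mul_pos hc₁ hQ) ht0) hP) hR,
      mul_pos (mul_pos (mul_pos (mul_pos hc₂ hQ) ht0) hP) hR,
      mul_pos (mul_pos ht0 hP) hR]
  calc ENNReal.ofReal (t/2) * (ENNReal.ofReal (c₁ * s ^ (-(2+k))) * L
        + ENNReal.ofReal (c₂ * s ^ (-k) * ρ ^ (-(2:ℝ))) * M)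
      = ENNReal.ofReal (t/2 * (c₁ * s ^ (-(2+k)))) * L
        + ENNReal.ofReal (t/2 * (c₂ * s ^ (-k) * ρ ^ (-(2:ℝ)))) * M := by
        rw [mul_add, ← mul_assoc, ← mul_assoc,
          ← ENNReal.ofReal_mul (by positivity), ← ENNReal.ofReal_mul (by positivity)]
    _ ≤ ENNReal.ofReal (c * t ^ (-(k/2))) * L
        + (ENNReal.ofReal (c * t ^ (-(k/2))) * ENNReal.ofReal (t / ρ ^ 2)) * M := by
        apply add_le_add
        · exact mul_le_mul_left (ENNReal.ofReal_le_ofReal h_i) L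
        · rw [← ENNReal.ofReal_mul (by positivity)]
          exact mul_le_mul_left (ENNReal.ofReal_le_ofReal h_ii) M
    _ = ENNReal.ofReal (c * t ^ (-(k/2))) * (L + ENNReal.ofReal (t / ρ ^ 2) * M) := by
        rw [mul_add, mul_assoc]
end
end
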